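/- Let M ⊆ 𝔽₂^m be a subspace and β > 0. Then the random-bond transpose partition function satisfies, exactly: Σ_{f ∈ 𝔽₂^m} Σ_{g ∈ M} exp(−β·(‖f‖ + ‖f+g‖)) = (1/|M^⊥|) · (1 + exp(−β))^{2m} · Σ_{h ∈ M^⊥} (tanh(β/2))^{2‖h‖}. (Eq. (Tdual): the disorder-averaged random-bond transpose model at inverse temperature β equals, up to the trivial factor, the perpendicular-complement model at inverse temperature 2β′ where exp(−β′) = tanh(β/2); so the study of the random-bond model reduces to the standard model.) -/

import Mathlib

/-!
For fixed `g`, the sum `∑_f x ^ (‖f‖ + ‖f + g‖)` factors over coordinates into `1 + x²` where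
`gᵢ = 0` and `2x` where `gᵢ = 1`. With `K = (1 + x)² / 2` and `(1 + x) u = 1 - x` these factors are
`K (1 ± u²)`, the coordinate factors of the Fourier transform `K ^ m ∑_h u ^ (2‖h‖) (-1) ^ (g ⬝ h)`.
Summing over `g ∈ M`, orthogonality of characters keeps exactly the `h ∈ M^⊥`, each with weight
`|M|`, and `|M| |M^⊥| = 2 ^ m` (the same character sum, counted the other way) turns `K ^ m |M|`
into `(1 + x) ^ (2m) / |M^⊥|`. For `x = e^{-β}` one has `u = tanh (β / 2)`.
-/

open Finset

/-- Hamming weight of a binary vector. -/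
def wt {m : ℕ} (v : Fin m → ZMod 2) : ℕ :=
  (Finset.univ.filter (fun i => v i = 1)).card

open Matrix

lemma zmod_two_eq_zero_or_eq_one (b : ZMod 2) : b = 0 ∨ b = 1 := by
  revert b; decide

lemma sum_zmod_two {R : Type*} [AddCommMonoid R] (F : ZMod 2 → R) : ∑ a, F a = F 0 + F 1 :=
  Fin.sum_univ_two F

noncomputable def signChar : AddChar (ZMod 2) ℝ :=
  AddChar.zmodChar 2 (by norm_num : (-1 : ℝ) ^ 2 = 1)

@[simp] lemma signChar_one : signChar 1 = -1 :=
  pow_one _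

lemma signChar_eq_one_iff {a : ZMod 2} : signChar a = 1 ↔ a = 0 := by
  rcases zmod_two_eq_zero_or_eq_one a with rfl | rfl <;> norm_num

lemma signChar_sum {κ : Type*} (s : Finset κ) (a : κ → ZMod 2) :
    signChar (∑ i ∈ s, a i) = ∏ i ∈ s, signChar (a i) := by
  induction s using Finset.cons_induction with
  | empty => simp
  | cons i s hi ih => rw [sum_cons, prod_cons, AddChar.map_add_eq_mul, ih]

noncomputable def dotProductChar {ι : Type*} [Fintype ι] (M : Submodule (ZMod 2) (ι → ZMod 2))
    (h : ι → ZMod 2) : AddChar M ℝ :=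
  signChar.compAddMonoidHom
    (AddMonoidHom.mk' (fun g : M => (g : ι → ZMod 2) ⬝ᵥ h) fun _ _ => add_dotProduct _ _ _)

section Orthogonality

variable {ι : Type*} [Fintype ι] [DecidableEq ι]

open scoped Classical in
lemma sum_signChar_dotProduct (M : Submodule (ZMod 2) (ι → ZMod 2)) (h : ι → ZMod 2) :
    ∑ g ∈ univ.filter (· ∈ M), signChar (g ⬝ᵥ h) =
      if ∀ g ∈ M, g ⬝ᵥ h = 0 then (#(univ.filter (· ∈ M)) : ℝ) else 0 := by
  have hψ : dotProductChar M h = 0 ↔ ∀ g ∈ M, g ⬝ᵥ h = 0 := by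
    simp [AddChar.eq_zero_iff, dotProductChar, signChar_eq_one_iff]
  rw [sum_subtype _ (fun _ => mem_filter_univ _), ← Fintype.card_subtype]
  refine (dotProductChar M h).sum_eq_ite.trans ?_
  simp only [hψ]

lemma sum_signChar_dotProduct_univ (g : ι → ZMod 2) :
    ∑ h, signChar (g ⬝ᵥ h) = if g = 0 then (2 : ℝ) ^ Fintype.card ι else 0 := by
  classical
  have := sum_signChar_dotProduct (⊤ : Submodule (ZMod 2) (ι → ZMod 2)) g
  simp only [Submodule.mem_top, filter_true, true_implies, dotProduct_comm _ g,
    dotProduct_eq_zero_iff, card_univ, Fintype.card_fun, ZMod.card, Nat.cast_pow] at this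
  exact this

open scoped Classical in
lemma card_mul_card_orthogonal (M : Submodule (ZMod 2) (ι → ZMod 2)) :
    (#(univ.filter (· ∈ M)) : ℝ) * #(univ.filter fun h => ∀ g ∈ M, g ⬝ᵥ h = 0) =
      2 ^ Fintype.card ι := by
  calc (#(univ.filter (· ∈ M)) : ℝ) * #(univ.filter fun h => ∀ g ∈ M, g ⬝ᵥ h = 0)
      = ∑ h, ∑ g ∈ univ.filter (· ∈ M), signChar (g ⬝ᵥ h) := by
        simp_rw [sum_signChar_dotProduct, sum_ite, sum_const_zero, add_zero, sum_const,
          nsmul_eq_mul, mul_comm]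
    _ = ∑ g ∈ univ.filter (· ∈ M), ∑ h, signChar (g ⬝ᵥ h) := sum_comm
    _ = 2 ^ Fintype.card ι := by
        simp_rw [sum_signChar_dotProduct_univ]
        rw [sum_ite_eq', if_pos ((mem_filter_univ _).2 M.zero_mem)]

end Orthogonality

section Weight

variable {m : ℕ}

lemma pow_wt {R : Type*} [CommMonoid R] (x : R) (v : Fin m → ZMod 2) :
    x ^ wt v = ∏ i, if v i = 1 then x else 1 := by
  rw [wt, ← prod_const, prod_filter]

lemma sum_pow_wt_add_wt {R : Type*} [CommSemiring R] (x : R) (g : Fin m → ZMod 2) :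
    ∑ f, x ^ (wt f + wt (f + g)) = ∏ i, if g i = 0 then 1 + x ^ 2 else 2 * x := by
  simp_rw [pow_add, pow_wt, ← prod_mul_distrib, Pi.add_apply]
  rw [← Fintype.prod_sum (fun i a => (if a = 1 then x else 1) * if a + g i = 1 then x else 1)]
  refine prod_congr rfl fun i _ => ?_
  rcases zmod_two_eq_zero_or_eq_one (g i) with hg | hg <;>
    simp [sum_zmod_two, hg, two_mul, sq]

lemma sum_pow_wt_mul_signChar (y : ℝ) (g : Fin m → ZMod 2) :
    ∑ h, y ^ wt h * signChar (g ⬝ᵥ h) = ∏ i, if g i = 0 then 1 + y else 1 - y := by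
  simp_rw [dotProduct, signChar_sum, pow_wt, ← prod_mul_distrib]
  rw [← Fintype.prod_sum (fun i a => (if a = 1 then y else 1) * signChar (g i * a))]
  refine prod_congr rfl fun i _ => ?_
  rcases zmod_two_eq_zero_or_eq_one (g i) with hg | hg <;>
    simp [sum_zmod_two, hg, sub_eq_add_neg]

lemma sum_pow_wt_add_wt_eq {x u : ℝ} (hu : (1 + x) * u = 1 - x) (g : Fin m → ZMod 2) :
    ∑ f, x ^ (wt f + wt (f + g)) =
      ((1 + x) ^ 2 / 2) ^ m * ∑ h, u ^ (2 * wt h) * signChar (g ⬝ᵥ h) := by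
  have hcoord (b : ZMod 2) : (if b = 0 then 1 + x ^ 2 else 2 * x) =
      (1 + x) ^ 2 / 2 * if b = 0 then 1 + u ^ 2 else 1 - u ^ 2 := by
    split_ifs
    · linear_combination (-(1 + x) * u - (1 - x)) / 2 * hu
    · linear_combination ((1 + x) * u + (1 - x)) / 2 * hu
  simp_rw [pow_mul, sum_pow_wt_mul_signChar, sum_pow_wt_add_wt, hcoord, prod_mul_distrib,
    prod_const, card_univ, Fintype.card_fin]

open scoped Classical in
lemma sum_sum_pow_wt_add_wt (M : Submodule (ZMod 2) (Fin m → ZMod 2)) {x u : ℝ}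
    (hu : (1 + x) * u = 1 - x) :
    ∑ f, ∑ g ∈ univ.filter (· ∈ M), x ^ (wt f + wt (f + g)) =
      1 / #(univ.filter fun h => ∀ g ∈ M, g ⬝ᵥ h = 0) * (1 + x) ^ (2 * m) *
        ∑ h ∈ univ.filter (fun h => ∀ g ∈ M, g ⬝ᵥ h = 0), u ^ (2 * wt h) := by
  calc ∑ f, ∑ g ∈ univ.filter (· ∈ M), x ^ (wt f + wt (f + g))
      = ∑ g ∈ univ.filter (· ∈ M),
          ((1 + x) ^ 2 / 2) ^ m * ∑ h, u ^ (2 * wt h) * signChar (g ⬝ᵥ h) := by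
        rw [sum_comm]
        simp_rw [sum_pow_wt_add_wt_eq hu]
    _ = ((1 + x) ^ 2 / 2) ^ m *
          ∑ h, u ^ (2 * wt h) * ∑ g ∈ univ.filter (· ∈ M), signChar (g ⬝ᵥ h) := by
        simp_rw [mul_sum]
        exact sum_comm
    _ = ((1 + x) ^ 2 / 2) ^ m * #(univ.filter (· ∈ M)) *
          ∑ h ∈ univ.filter (fun h => ∀ g ∈ M, g ⬝ᵥ h = 0), u ^ (2 * wt h) := by
        rw [mul_assoc]
        congr 1
        simp_rw [sum_signChar_dotProduct, mul_ite, mul_zero]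
        rw [← sum_filter, mul_sum]
        exact sum_congr rfl fun _ _ => mul_comm _ _
    _ = _ := by
        have hcard := card_mul_card_orthogonal M
        rw [Fintype.card_fin] at hcard
        have hperp : (#(univ.filter fun h => ∀ g ∈ M, g ⬝ᵥ h = 0) : ℝ) ≠ 0 :=
          right_ne_zero_of_mul (hcard ▸ pow_ne_zero m two_ne_zero)
        congr 1
        field_simp
        rw [mul_assoc, hcard, pow_mul, ← mul_pow, div_mul_cancel₀ _ two_ne_zero]

end Weight

lemma one_add_exp_neg_mul_tanh_half (β : ℝ) :
    (1 + Real.exp (-β)) * Real.tanh (β / 2) = 1 - Real.exp (-β) := by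
  have hβ : Real.exp (-β) = Real.exp (-(β / 2)) * Real.exp (-(β / 2)) := by
    rw [← Real.exp_add]; ring_nf
  have hinv : Real.exp (β / 2) * Real.exp (-(β / 2)) = 1 := by
    rw [← Real.exp_add]; simp
  have hpos : 0 < Real.exp (β / 2) + Real.exp (-(β / 2)) := by positivity
  rw [Real.tanh_eq, hβ]
  field_simp
  linear_combination 2 * Real.exp (-(β / 2)) * hinv

open scoped Classical in
theorem random_bond_transpose_duality_general {m : ℕ}
    (M : Submodule (ZMod 2) (Fin m → ZMod 2)) (β : ℝ) :
    ∑ f : Fin m → ZMod 2, ∑ g ∈ Finset.univ.filter (fun g => g ∈ M),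
        Real.exp (-β * ((wt f : ℝ) + (wt (f + g) : ℝ)))
      = (1 / (Nat.card {h : Fin m → ZMod 2 | ∀ g ∈ M, ∑ i, g i * h i = 0} : ℝ)) *
          (1 + Real.exp (-β)) ^ (2 * m) *
          ∑ h ∈ Finset.univ.filter (fun h : Fin m → ZMod 2 => ∀ g ∈ M, ∑ i, g i * h i = 0),
            Real.tanh (β / 2) ^ (2 * wt h) := by
  have hexp (f g : Fin m → ZMod 2) : Real.exp (-β * ((wt f : ℝ) + (wt (f + g) : ℝ))) =
      Real.exp (-β) ^ (wt f + wt (f + g)) := by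
    rw [← Real.exp_nat_mul, mul_comm]
    push_cast
    rfl
  rw [Nat.card_eq_fintype_card, Fintype.card_subtype]
  simp_rw [hexp]
  exact sum_sum_pow_wt_add_wt M (one_add_exp_neg_mul_tanh_half β)

open scoped Classical in
/-- **Random-bond transpose duality** (Eq. (Tdual)): the disorder-averaged random-bond
transpose partition function at inverse temperature `β` equals, up to the trivial factor
`(1+e^{−β})^{2m} / |M^⊥|`, the perpendicular-complement model at inverse temperature
`2β'` where `e^{−β'} = tanh(β/2)`. -/
theorem random_bond_transpose_duality {m : ℕ}
    (M : Submodule (ZMod 2) (Fin m → ZMod 2)) (β : ℝ) (hβ : 0 < β) :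
    ∑ f : Fin m → ZMod 2, ∑ g ∈ Finset.univ.filter (fun g => g ∈ M),
        Real.exp (-β * ((wt f : ℝ) + (wt (f + g) : ℝ)))
      = (1 / (Nat.card {h : Fin m → ZMod 2 | ∀ g ∈ M, ∑ i, g i * h i = 0} : ℝ)) *
          (1 + Real.exp (-β)) ^ (2 * m) *
          ∑ h ∈ Finset.univ.filter (fun h : Fin m → ZMod 2 => ∀ g ∈ M, ∑ i, g i * h i = 0),
            Real.tanh (β / 2) ^ (2 * wt h) :=
  random_bond_transpose_duality_general M β
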